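/- Reductions preserve tree-like equivalence class: for all Lipschitz paths α, γ, β : [0,1] → ℝ^N, the path α * (γ * γ⁻¹) * β is tree-like equivalent to α * β. -/

import Mathlib

noncomputable section

/-- Concatenation of paths: `(Γ₁*Γ₂)(t) = Γ₁(2t)` for `t ∈ [0,1/2)` and
`(Γ₁*Γ₂)(t) = Γ₁(1) − Γ₂(0) + Γ₂(2t−1)` for `t ∈ [1/2,1]`. -/
def concat {N : ℕ} (Γ₁ Γ₂ : ℝ → EuclideanSpace ℝ (Fin N)) :
    ℝ → EuclideanSpace ℝ (Fin N) :=
  fun t => if t < 1/2 then Γ₁ (2 * t) else Γ₁ 1 - Γ₂ 0 + Γ₂ (2 * t - 1)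

/-- The inverse path `Γ⁻¹(t) = Γ(1−t)`. -/
def pathInv {N : ℕ} (Γ : ℝ → EuclideanSpace ℝ (Fin N)) : ℝ → EuclideanSpace ℝ (Fin N) :=
  fun t => Γ (1 - t)

/-- A path `Γ : [0,1] → ℝ^N` is Lipschitz tree-like if there is a continuous nonnegative
function `h : [0,1] → ℝ` of bounded variation with `h(0) = h(1) = 0` such that
`‖Γ(t) − Γ(s)‖ ≤ h(s) + h(t) − 2 inf_{u ∈ [s,t]} h(u)` for all `0 ≤ s ≤ t ≤ 1`. -/
def LipschitzTreeLike {N : ℕ} (Γ : ℝ → EuclideanSpace ℝ (Fin N)) : Prop :=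
  ∃ h : ℝ → ℝ, ContinuousOn h (Set.Icc 0 1) ∧ (∀ t ∈ Set.Icc (0:ℝ) 1, 0 ≤ h t) ∧
    BoundedVariationOn h (Set.Icc 0 1) ∧ h 0 = 0 ∧ h 1 = 0 ∧
    ∀ s t : ℝ, 0 ≤ s → s ≤ t → t ≤ 1 →
      ‖Γ t - Γ s‖ ≤ h s + h t - 2 * sInf (h '' Set.Icc s t)

/-- Two paths are tree-like equivalent if `Γ₁ * Γ₂⁻¹` is Lipschitz tree-like. -/
def TreeLikeEquiv {N : ℕ} (Γ₁ Γ₂ : ℝ → EuclideanSpace ℝ (Fin N)) : Prop :=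
  LipschitzTreeLike (concat Γ₁ (pathInv Γ₂))

/-- A Lipschitz path on `[0,1]`. -/
def IsLipPath {N : ℕ} (Γ : ℝ → EuclideanSpace ℝ (Fin N)) : Prop :=
  ∃ K : NNReal, LipschitzOnWith K Γ (Set.Icc 0 1)

/-!
The loop `α (γ γ⁻¹) β (α β)⁻¹` runs along a tree: up the trunk `α`, out and back along the
branch `γ`, out and back along the branch `β`, and down the trunk again. At time `t` it sits at
`α (timeα t) + (γ (timeγ t) - γ 0) + (β (timeβ t) - β 0)` for three piecewise linear clocks with
values in `[0,1]`, and the height is the sum of the cumulative variations of `α, γ, β` read off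
at these clocks. For `s ≤ t` there is a time `r ∈ [s,t]` (when the loop passes the branch point
of its positions at `s` and `t`) at which every clock is at most its values at `s` and at `t`;
summing `‖f x - f y‖ ≤ V x + V y - 2 V z` (for `z ≤ x, y`) over the three paths then gives the
tree-like inequality.
-/

open Set

section Variation

variable {α E : Type*} [LinearOrder α] [PseudoMetricSpace E] {f : α → E} {s : Set α}

theorem variationOnFromTo.dist_le_sub_of_le (hf : LocallyBoundedVariationOn f s) {a b c : α}
    (as : a ∈ s) (bs : b ∈ s) (cs : c ∈ s) (bc : b ≤ c) :
    dist (f b) (f c) ≤ variationOnFromTo f s a c - variationOnFromTo f s a b := by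
  rw [variationOnFromTo.sub_right hf as cs bs, variationOnFromTo.eq_of_le f s bc, dist_edist]
  exact ENNReal.toReal_mono (hf b c bs cs)
    (eVariationOn.edist_le f ⟨bs, le_rfl, bc⟩ ⟨cs, bc, le_rfl⟩)

theorem variationOnFromTo.dist_le_add_sub_of_le_of_le (hf : LocallyBoundedVariationOn f s)
    {a x y z : α} (as : a ∈ s) (xs : x ∈ s) (ys : y ∈ s) (zs : z ∈ s) (zx : z ≤ x)
    (zy : z ≤ y) :
    dist (f x) (f y) ≤
      variationOnFromTo f s a x + variationOnFromTo f s a y - 2 * variationOnFromTo f s a z := by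
  have hx := variationOnFromTo.dist_le_sub_of_le hf as zs xs zx
  have hy := variationOnFromTo.dist_le_sub_of_le hf as zs ys zy
  linarith [dist_triangle_left (f x) (f y) (f z)]

end Variation

theorem LipschitzOnWith.variationOnFromTo {E : Type*} [PseudoMetricSpace E] {f : ℝ → E}
    {s : Set ℝ} {K : NNReal} (hf : LipschitzOnWith K f s) {a : ℝ} (as : a ∈ s) :
    LipschitzOnWith K (_root_.variationOnFromTo f s a) s := by
  have key : ∀ x ∈ s, ∀ y ∈ s, x ≤ y → dist (_root_.variationOnFromTo f s a x)
      (_root_.variationOnFromTo f s a y) ≤ K * dist x y := by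
    intro x xs y ys hxy
    have hvar : eVariationOn f (s ∩ Icc x y) ≤ K * ENNReal.ofReal (y - x) := by
      rw [← eVariationOn_id xs ys]
      exact hf.comp_eVariationOn_le (g := id) inter_subset_left
    rw [dist_comm, Real.dist_eq, variationOnFromTo.sub_right hf.locallyBoundedVariationOn as ys xs,
      abs_of_nonneg (variationOnFromTo.nonneg_of_le f s hxy), variationOnFromTo.eq_of_le f s hxy,
      dist_comm, Real.dist_eq, abs_of_nonneg (sub_nonneg.2 hxy)]
    simpa [ENNReal.toReal_ofReal (sub_nonneg.2 hxy)] using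
      ENNReal.toReal_mono (by finiteness) hvar
  refine LipschitzOnWith.of_dist_le_mul fun x xs y ys => ?_
  rcases le_total x y with hxy | hyx
  · exact key x xs y ys hxy
  · rw [dist_comm, dist_comm x]
    exact key y ys x xs hyx

theorem LipschitzOnWith.sum {ι α E : Type*} [PseudoEMetricSpace α] [SeminormedAddCommGroup E]
    {t : Finset ι} {f : ι → α → E} {K : ι → NNReal} {s : Set α}
    (hf : ∀ i ∈ t, LipschitzOnWith (K i) (f i) s) :
    LipschitzOnWith (∑ i ∈ t, K i) (fun x => ∑ i ∈ t, f i x) s := by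
  classical
  induction t using Finset.induction_on with
  | empty => simpa using (LipschitzWith.const (α := α) (0 : E)).lipschitzOnWith (s := s)
  | insert j t hj ih =>
    simp only [Finset.sum_insert hj]
    exact (hf j (Finset.mem_insert_self j t)).add
      (ih fun i hi => hf i (Finset.mem_insert_of_mem hi))

theorem LipschitzTreeLike.of_eq_add_sum_comp {N : ℕ} {ι : Type*} [Fintype ι]
    {Γ : ℝ → EuclideanSpace ℝ (Fin N)} {c : EuclideanSpace ℝ (Fin N)}
    {f : ι → ℝ → EuclideanSpace ℝ (Fin N)} {φ : ι → ℝ → ℝ} {K L : ι → NNReal}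
    (hf : ∀ i, LipschitzOnWith (K i) (f i) (Icc 0 1)) (hφ : ∀ i, LipschitzWith (L i) (φ i))
    (hφ_mapsTo : ∀ i, MapsTo (φ i) (Icc 0 1) (Icc 0 1))
    (hφ_zero : ∀ i, φ i 0 = 0) (hφ_one : ∀ i, φ i 1 = 0)
    (hφ_dip : ∀ s t : ℝ, 0 ≤ s → s ≤ t → t ≤ 1 →
      ∃ r ∈ Icc s t, ∀ i, φ i r ≤ φ i s ∧ φ i r ≤ φ i t)
    (hΓ : ∀ t ∈ Icc (0 : ℝ) 1, Γ t = c + ∑ i, f i (φ i t)) :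
    LipschitzTreeLike Γ := by
  have h0 : (0 : ℝ) ∈ Icc 0 1 := left_mem_Icc.2 zero_le_one
  have h1 : (1 : ℝ) ∈ Icc 0 1 := right_mem_Icc.2 zero_le_one
  set V : ι → ℝ → ℝ := fun i => variationOnFromTo (f i) (Icc 0 1) 0
  set h : ℝ → ℝ := fun t => ∑ i, V i (φ i t)
  have h_lip : LipschitzOnWith (∑ i, K i * L i) h (Icc 0 1) :=
    LipschitzOnWith.sum fun i _ =>
      ((hf i).variationOnFromTo h0).comp (hφ i).lipschitzOnWith (hφ_mapsTo i)
  have h_nonneg : ∀ t ∈ Icc (0 : ℝ) 1, 0 ≤ h t := fun t ht =>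
    Finset.sum_nonneg fun i _ => variationOnFromTo.nonneg_of_le _ _ (hφ_mapsTo i ht).1
  refine ⟨h, h_lip.continuousOn, h_nonneg, ?_, by simp [h, V, hφ_zero, variationOnFromTo.self],
    by simp [h, V, hφ_one, variationOnFromTo.self], fun s t hs hst ht => ?_⟩
  · simpa using h_lip.locallyBoundedVariationOn 0 1 h0 h1
  have hs' : s ∈ Icc (0 : ℝ) 1 := ⟨hs, hst.trans ht⟩
  have ht' : t ∈ Icc (0 : ℝ) 1 := ⟨hs.trans hst, ht⟩
  obtain ⟨r, hr, hr_le⟩ := hφ_dip s t hs hst ht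
  have hr' : r ∈ Icc (0 : ℝ) 1 := ⟨hs.trans hr.1, hr.2.trans ht⟩
  have h_inf : sInf (h '' Icc s t) ≤ h r :=
    csInf_le ⟨0, forall_mem_image.2 fun x hx => h_nonneg x ⟨hs.trans hx.1, hx.2.trans ht⟩⟩
      (mem_image_of_mem h hr)
  calc ‖Γ t - Γ s‖ = ‖∑ i, (f i (φ i t) - f i (φ i s))‖ := by
        rw [hΓ t ht', hΓ s hs', add_sub_add_left_eq_sub, Finset.sum_sub_distrib]
    _ ≤ ∑ i, (V i (φ i s) + V i (φ i t) - 2 * V i (φ i r)) := by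
        refine (norm_sum_le _ _).trans (Finset.sum_le_sum fun i _ => ?_)
        rw [← dist_eq_norm, add_comm (V i _)]
        exact variationOnFromTo.dist_le_add_sub_of_le_of_le (hf i).locallyBoundedVariationOn h0
          (hφ_mapsTo i ht') (hφ_mapsTo i hs') (hφ_mapsTo i hr') (hr_le i).2 (hr_le i).1
    _ = h s + h t - 2 * h r := by
        simp only [h, Finset.sum_sub_distrib, Finset.sum_add_distrib, Finset.mul_sum]
    _ ≤ h s + h t - 2 * sInf (h '' Icc s t) := by linarith

namespace Reduction

-- The loop runs through `α, γ, γ⁻¹, β, β⁻¹, α⁻¹` during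
-- `[0,1/8], [1/8,3/16], [3/16,1/4], [1/4,1/2], [1/2,3/4], [3/4,1]`.
def timeα (t : ℝ) : ℝ := min (min (8 * t) 1) (4 - 4 * t)

def timeγ (t : ℝ) : ℝ := max 0 (min (16 * t - 2) (4 - 16 * t))

def timeβ (t : ℝ) : ℝ := max 0 (min (4 * t - 1) (3 - 4 * t))

def time : Fin 3 → ℝ → ℝ
  | 0 => timeα
  | 1 => timeγ
  | 2 => timeβ

theorem timeα_eq_ite (t : ℝ) :
    timeα t = if t < 1/8 then 8 * t else if t ≤ 3/4 then 1 else 4 - 4 * t := by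
  unfold timeα; split_ifs <;> grind

theorem timeγ_eq_ite (t : ℝ) : timeγ t =
    if t < 1/8 then 0 else if t < 3/16 then 16 * t - 2 else if t < 1/4 then 4 - 16 * t else 0 := by
  unfold timeγ; split_ifs <;> grind

theorem timeβ_eq_ite (t : ℝ) : timeβ t =
    if t < 1/4 then 0 else if t < 1/2 then 4 * t - 1 else if t ≤ 3/4 then 3 - 4 * t else 0 := by
  unfold timeβ; split_ifs <;> grind

theorem lipschitzWith_time (i : Fin 3) : LipschitzWith 16 (time i) := by
  refine LipschitzWith.of_dist_le_mul fun x y => ?_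
  fin_cases i <;> simp only [time, timeα, timeγ, timeβ, Real.dist_eq, NNReal.coe_ofNat] <;> grind

theorem mapsTo_time (i : Fin 3) : MapsTo (time i) (Icc 0 1) (Icc 0 1) := by
  intro t ht
  fin_cases i <;> simp only [time, timeα, timeγ, timeβ, mem_Icc] at ht ⊢ <;> grind

theorem time_apply_zero (i : Fin 3) : time i 0 = 0 := by
  fin_cases i <;> norm_num [time, timeα, timeγ, timeβ]

theorem time_apply_one (i : Fin 3) : time i 1 = 0 := by
  fin_cases i <;> norm_num [time, timeα, timeγ, timeβ]

theorem time_quarter_le {x : ℝ} (h₁ : 1/8 ≤ x) (h₂ : x ≤ 3/4) (i : Fin 3) :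
    time i (1/4) ≤ time i x := by
  fin_cases i <;> simp only [time, timeα, timeγ, timeβ] <;> grind

theorem time_le_time_or_time_le_time {s t : ℝ} (hst : s ≤ t)
    (h : ¬(1/8 ≤ s ∧ s ≤ 1/4 ∧ 1/4 ≤ t ∧ t ≤ 3/4)) :
    (∀ i, time i s ≤ time i t) ∨ ∀ i, time i t ≤ time i s := by
  have key : (timeα s ≤ timeα t ∧ timeγ s ≤ timeγ t ∧ timeβ s ≤ timeβ t) ∨
      (timeα t ≤ timeα s ∧ timeγ t ≤ timeγ s ∧ timeβ t ≤ timeβ s) := by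
    simp only [timeα, timeγ, timeβ]
    grind (splits := 40)
  rcases key with ⟨hα, hγ, hβ⟩ | ⟨hα, hγ, hβ⟩
  · exact .inl fun i => by fin_cases i <;> assumption
  · exact .inr fun i => by fin_cases i <;> assumption

theorem exists_time_le {s t : ℝ} (hst : s ≤ t) :
    ∃ r ∈ Icc s t, ∀ i, time i r ≤ time i s ∧ time i r ≤ time i t := by
  -- At time `1/4` the loop passes the fork between the branches `γ` and `β`.
  by_cases h : 1/8 ≤ s ∧ s ≤ 1/4 ∧ 1/4 ≤ t ∧ t ≤ 3/4
  · exact ⟨1/4, ⟨h.2.1, h.2.2.1⟩, fun i =>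
      ⟨time_quarter_le h.1 (by linarith) i, time_quarter_le (by linarith) h.2.2.2 i⟩⟩
  · rcases time_le_time_or_time_le_time hst h with hle | hle
    · exact ⟨s, left_mem_Icc.2 hst, fun i => ⟨le_rfl, hle i⟩⟩
    · exact ⟨t, right_mem_Icc.2 hst, fun i => ⟨hle i, le_rfl⟩⟩

theorem reductionLoop_eq {N : ℕ} (α γ β : ℝ → EuclideanSpace ℝ (Fin N)) (t : ℝ) :
    concat (concat (concat α (concat γ (pathInv γ))) β) (pathInv (concat α β)) t =
      -(γ 0 + β 0) + ∑ i, ![α, γ, β] i (time i t) := by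
  simp only [Fin.sum_univ_three, time, Matrix.cons_val_zero, Matrix.cons_val_one,
    Matrix.cons_val_two, Matrix.head_cons, Matrix.tail_cons, timeα_eq_ite, timeγ_eq_ite,
    timeβ_eq_ite, concat, pathInv]
  norm_num only
  split_ifs <;> first | contradiction | (exfalso; linarith) | (ring_nf; abel)

end Reduction

/-- Reductions preserve tree-like equivalence class: for all Lipschitz paths
`α, γ, β : [0,1] → ℝ^N`, the path `α * (γ * γ⁻¹) * β` is tree-like equivalent to `α * β`. -/
theorem reduction_treeLikeEquiv {N : ℕ}
    (α γ β : ℝ → EuclideanSpace ℝ (Fin N))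
    (hα : IsLipPath α) (hγ : IsLipPath γ) (hβ : IsLipPath β) :
    TreeLikeEquiv (concat (concat α (concat γ (pathInv γ))) β) (concat α β) := by
  obtain ⟨Kα, hKα⟩ := hα
  obtain ⟨Kγ, hKγ⟩ := hγ
  obtain ⟨Kβ, hKβ⟩ := hβ
  exact LipschitzTreeLike.of_eq_add_sum_comp (f := ![α, γ, β]) (K := ![Kα, Kγ, Kβ])
    (fun i => by fin_cases i <;> assumption) Reduction.lipschitzWith_time Reduction.mapsTo_time
    Reduction.time_apply_zero Reduction.time_apply_one
    (fun _ _ _ hst _ => Reduction.exists_time_le hst)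
    (fun t _ => Reduction.reductionLoop_eq α γ β t)
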